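/- arXiv:2303.00328 — 2 statements merged into one kernel-verified Lean document; each statement's English description precedes it below -/
import Mathlib

section
/- Let K_{r,s} be a complete bipartite graph with vertex bipartition (A,B) and let P_A := {z∈P_T(K_{r,s}) : z_w = 0 for all w∈B}. Then P_A equals the set of points (x,y)∈ℝ^V×ℝ^E with x,y ≥ 0, x_w = 0 for all w∈B, satisfying x_v + Σ_{e∈δ(v)} y_e ≤ 1 for every v∈A and Σ_{e∈δ(w)} y_e ≤ 1 for every w∈B. -/
open Finset

variable {V : Type*}

/-- Adjacency between elements (vertices and edges) of a graph. -/
def elemAdj (G : SimpleGraph V) : V ⊕ G.edgeSet → V ⊕ G.edgeSet → Prop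
  | Sum.inl v, Sum.inl w => G.Adj v w
  | Sum.inl v, Sum.inr e => v ∈ (e : Sym2 V)
  | Sum.inr e, Sum.inl v => v ∈ (e : Sym2 V)
  | Sum.inr e, Sum.inr f => e ≠ f ∧ ∃ v, v ∈ (e : Sym2 V) ∧ v ∈ (f : Sym2 V)

/-- A total matching is a set of pairwise non-adjacent elements. -/
def IsTotalMatching (G : SimpleGraph V) (T : Set (V ⊕ G.edgeSet)) : Prop :=
  ∀ d ∈ T, ∀ d' ∈ T, d ≠ d' → ¬ elemAdj G d d'

/-- Characteristic vector of a set of elements. -/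
noncomputable def charVec (G : SimpleGraph V) (T : Set (V ⊕ G.edgeSet)) :
    V ⊕ G.edgeSet → ℝ :=
  T.indicator fun _ => 1

/-- The total matching polytope: convex hull of characteristic vectors of total matchings. -/
def totalMatchingPolytope (G : SimpleGraph V) : Set ((V ⊕ G.edgeSet) → ℝ) :=
  convexHull ℝ {z | ∃ T, IsTotalMatching G T ∧ z = charVec G T}

/-- `G` is the complete bipartite graph with vertex bipartition `(A, B)`. -/
def IsCompleteBipartiteWith [Fintype V] [DecidableEq V]
    (G : SimpleGraph V) (A B : Finset V) : Prop :=
  Disjoint A B ∧ A ∪ B = Finset.univ ∧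
    ∀ v w, G.Adj v w ↔ ((v ∈ A ∧ w ∈ B) ∨ (v ∈ B ∧ w ∈ A))

set_option linter.unusedSectionVars false

section AuxHelpers
variable [Fintype V] [DecidableEq V] (G : SimpleGraph V) [DecidableRel G.Adj]

lemma permMatrix_apply' {n : Type*} [DecidableEq n] (σ : Equiv.Perm n) (i j : n) :
    σ.permMatrix ℝ i j = if σ i = j then 1 else 0 := by
  simp [Equiv.Perm.permMatrix, PEquiv.toMatrix_apply, Equiv.toPEquiv_apply]

lemma edgeSum_of_mem (y : G.edgeSet → ℝ) {c : Sym2 V} (hc : c ∈ G.edgeSet) :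
    ∑ e : G.edgeSet, (if (e : Sym2 V) = c then y e else 0) = y ⟨c, hc⟩ := by
  rw [Finset.sum_eq_single (⟨c, hc⟩ : G.edgeSet)]
  · simp
  · rintro ⟨e, he⟩ _ hne
    rw [if_neg]
    exact fun h => hne (Subtype.ext h)
  · simp

lemma edgeSum_of_notMem (y : G.edgeSet → ℝ) {c : Sym2 V} (hc : c ∉ G.edgeSet) :
    ∑ e : G.edgeSet, (if (e : Sym2 V) = c then y e else 0) = 0 := by
  apply Finset.sum_eq_zero
  rintro ⟨e, he⟩ _
  rw [if_neg]
  exact fun h => hc (h ▸ he)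

lemma nbr_sum (y : G.edgeSet → ℝ) (v : V) :
    ∑ w : V, (if h : G.Adj v w then y ⟨s(v, w), h⟩ else 0)
      = ∑ e : G.edgeSet, (if v ∈ (e : Sym2 V) then y e else 0) := by
  have step1 : ∀ w : V, (if h : G.Adj v w then y ⟨s(v, w), h⟩ else 0)
      = ∑ e : G.edgeSet, (if (e : Sym2 V) = s(v, w) then y e else 0) := by
    intro w
    by_cases h : G.Adj v w
    · rw [dif_pos h, edgeSum_of_mem G y (G.mem_edgeSet.mpr h)]
    · rw [dif_neg h, edgeSum_of_notMem G y (fun hc => h (G.mem_edgeSet.mp hc))]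
  simp_rw [step1]
  rw [Finset.sum_comm]
  apply Finset.sum_congr rfl
  rintro ⟨e, he⟩ _
  induction e using Sym2.ind with
  | _ a b =>
    by_cases hv : v ∈ s(a, b)
    · rw [if_pos hv]
      rw [Sym2.mem_iff] at hv
      rcases hv with rfl | rfl
      · simp_rw [Sym2.congr_right]
        simp
      · simp_rw [Sym2.eq_swap (a := a), Sym2.congr_right]
        simp
    · rw [if_neg hv]
      apply Finset.sum_eq_zero
      intro w _
      rw [if_neg]
      intro h
      exact hv (by rw [show s(a,b) = s(v,w) from h]; exact Sym2.mem_mk_left v w)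

lemma charVec_nonneg (T : Set (V ⊕ G.edgeSet)) (d : V ⊕ G.edgeSet) :
    0 ≤ charVec G T d := by
  unfold charVec
  classical
  rw [Set.indicator_apply]
  split <;> norm_num

lemma charVec_constraint {T : Set (V ⊕ G.edgeSet)} (hT : IsTotalMatching G T) (v : V) :
    charVec G T (Sum.inl v)
      + ∑ e : G.edgeSet, (if v ∈ (e : Sym2 V) then charVec G T (Sum.inr e) else 0) ≤ 1 := by
  classical
  set F : Finset G.edgeSet :=
    Finset.univ.filter (fun e : G.edgeSet => v ∈ (e : Sym2 V) ∧ Sum.inr e ∈ T) with hF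
  have hsum : ∑ e : G.edgeSet, (if v ∈ (e : Sym2 V) then charVec G T (Sum.inr e) else 0)
      = (F.card : ℝ) := by
    rw [hF, Finset.card_filter]
    push_cast
    apply Finset.sum_congr rfl
    intro e _
    unfold charVec
    rw [Set.indicator_apply]
    by_cases h1 : v ∈ (e : Sym2 V) <;> by_cases h2 : Sum.inr e ∈ T <;> simp [h1, h2]
  rw [hsum]
  have hcard : F.card ≤ 1 := by
    rw [Finset.card_le_one]
    intro e he f hf
    rw [hF, Finset.mem_filter] at he hf
    by_contra hne
    exact hT _ he.2.2 _ hf.2.2 (fun h => hne (Sum.inr.inj h))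
      ⟨hne, v, he.2.1, hf.2.1⟩
  by_cases hv : Sum.inl v ∈ T
  · have hF0 : F = ∅ := by
      rw [Finset.eq_empty_iff_forall_notMem]
      intro e he
      rw [hF, Finset.mem_filter] at he
      exact hT _ hv _ he.2.2 (by simp) he.2.1
    rw [hF0]
    unfold charVec
    rw [Set.indicator_of_mem hv]
    norm_num
  · unfold charVec
    rw [Set.indicator_of_notMem hv, zero_add]
    exact_mod_cast hcard

lemma exists_pair {A B : Finset V}
    (hAdj : ∀ v w, G.Adj v w ↔ ((v ∈ A ∧ w ∈ B) ∨ (v ∈ B ∧ w ∈ A)))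
    {e : Sym2 V} (he : e ∈ G.edgeSet) :
    ∃ a b, a ∈ A ∧ b ∈ B ∧ e = s(a, b) := by
  induction e using Sym2.ind with
  | _ u v =>
    rw [SimpleGraph.mem_edgeSet] at he
    rcases (hAdj u v).mp he with ⟨hu, hv⟩ | ⟨hu, hv⟩
    · exact ⟨u, v, hu, hv, rfl⟩
    · exact ⟨v, u, hv, hu, Sym2.eq_swap⟩

end AuxHelpers

/-- The doubly stochastic matrix associated to a point of the face `P_A`. -/
noncomputable def TMmat [Fintype V] [DecidableEq V] (G : SimpleGraph V) [DecidableRel G.Adj]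
    (z : (V ⊕ G.edgeSet) → ℝ) : Matrix (V ⊕ V) (V ⊕ V) ℝ
  | Sum.inl v, Sum.inl w =>
      (if v = w then
        1 - z (Sum.inl v) - ∑ e : G.edgeSet, (if v ∈ (e : Sym2 V) then z (Sum.inr e) else 0)
       else 0)
      + (if h : G.Adj v w then z (Sum.inr ⟨s(v, w), h⟩) else 0)
  | Sum.inl v, Sum.inr w => if v = w then z (Sum.inl v) else 0
  | Sum.inr v, Sum.inl w => if v = w then z (Sum.inl w) else 0
  | Sum.inr v, Sum.inr w => if v = w then 1 - z (Sum.inl v) else 0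

section TM
variable [Fintype V] [DecidableEq V] (G : SimpleGraph V) [DecidableRel G.Adj]

lemma TMmat_mem_DS (z : (V ⊕ G.edgeSet) → ℝ) (hpos : ∀ d, 0 ≤ z d)
    (hv1 : ∀ v : V, z (Sum.inl v)
      + ∑ e : G.edgeSet, (if v ∈ (e : Sym2 V) then z (Sum.inr e) else 0) ≤ 1) :
    TMmat G z ∈ doublyStochastic ℝ (V ⊕ V) := by
  have hρ0 : ∀ v : V,
      0 ≤ ∑ e : G.edgeSet, (if v ∈ (e : Sym2 V) then z (Sum.inr e) else 0) := by
    intro v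
    apply Finset.sum_nonneg
    intro e _
    split
    · exact hpos _
    · exact le_refl 0
  have hx1 : ∀ v : V, z (Sum.inl v) ≤ 1 := fun v => by
    have := hv1 v; have := hρ0 v; linarith
  have flip : ∀ u w : V, (if h : G.Adj u w then z (Sum.inr ⟨s(u, w), h⟩) else 0)
      = (if h : G.Adj w u then z (Sum.inr ⟨s(w, u), h⟩) else 0) := by
    intro u w
    by_cases h : G.Adj u w
    · rw [dif_pos h, dif_pos h.symm]
      exact congrArg z (congrArg Sum.inr (Subtype.ext Sym2.eq_swap))
    · rw [dif_neg h, dif_neg (fun h' => h h'.symm)]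
  rw [mem_doublyStochastic_iff_sum]
  refine ⟨?_, ?_, ?_⟩
  · rintro (v | v) (w | w) <;> simp only [TMmat]
    · apply add_nonneg
      · split
        · have := hv1 v; linarith
        · exact le_refl 0
      · split
        · exact hpos _
        · exact le_refl 0
    · split
      · exact hpos _
      · exact le_refl 0
    · split
      · exact hpos _
      · exact le_refl 0
    · split
      · have := hx1 v; linarith
      · exact le_refl 0
  · rintro (v | v)
    · rw [Fintype.sum_sum_type]
      simp only [TMmat]
      rw [Finset.sum_add_distrib, nbr_sum G (fun e => z (Sum.inr e)) v,
        Finset.sum_ite_eq Finset.univ v, Finset.sum_ite_eq Finset.univ v]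
      simp only [Finset.mem_univ, if_pos]
      ring
    · rw [Fintype.sum_sum_type]
      simp only [TMmat]
      rw [Finset.sum_ite_eq Finset.univ v, Finset.sum_ite_eq Finset.univ v]
      simp only [Finset.mem_univ, if_pos]
      ring
  · rintro (w | w)
    · rw [Fintype.sum_sum_type]
      simp only [TMmat]
      rw [Finset.sum_add_distrib]
      simp_rw [flip _ w]
      rw [nbr_sum G (fun e => z (Sum.inr e)) w,
        Finset.sum_ite_eq' Finset.univ w, Finset.sum_ite_eq' Finset.univ w]
      simp only [Finset.mem_univ, if_pos]
      ring
    · rw [Fintype.sum_sum_type]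
      simp only [TMmat]
      rw [Finset.sum_ite_eq' Finset.univ w, Finset.sum_ite_eq' Finset.univ w]
      simp only [Finset.mem_univ, if_pos]
      ring

/-- The total matching associated to a permutation of `V ⊕ V`. -/
def permTM (G : SimpleGraph V) (A B : Finset V) (σ : Equiv.Perm (V ⊕ V)) :
    Set (V ⊕ G.edgeSet) := fun d =>
  match d with
  | Sum.inl v => v ∈ A ∧ σ (Sum.inl v) = Sum.inr v
  | Sum.inr e => ∃ a b, a ∈ A ∧ b ∈ B ∧ (e : Sym2 V) = s(a, b) ∧ σ (Sum.inl a) = Sum.inl b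

lemma permTM_isTotalMatching {A B : Finset V} (hAB : Disjoint A B)
    (hAdj : ∀ v w, G.Adj v w ↔ ((v ∈ A ∧ w ∈ B) ∨ (v ∈ B ∧ w ∈ A)))
    (σ : Equiv.Perm (V ⊕ V)) : IsTotalMatching G (permTM G A B σ) := by
  rintro (v | e) hd (v' | e') hd' hne hadj
  · have hd2 : v ∈ A ∧ σ (Sum.inl v) = Sum.inr v := hd
    have hd2' : v' ∈ A ∧ σ (Sum.inl v') = Sum.inr v' := hd'
    have h : G.Adj v v' := hadj
    rcases (hAdj v v').mp h with ⟨-, h2⟩ | ⟨h2, -⟩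
    · exact Finset.disjoint_left.mp hAB hd2'.1 h2
    · exact Finset.disjoint_left.mp hAB hd2.1 h2
  · have hd2 : v ∈ A ∧ σ (Sum.inl v) = Sum.inr v := hd
    obtain ⟨a, b, ha, hb, he, hσ⟩ :
        ∃ a b, a ∈ A ∧ b ∈ B ∧ (e' : Sym2 V) = s(a, b) ∧ σ (Sum.inl a) = Sum.inl b := hd'
    have hv : v ∈ (e' : Sym2 V) := hadj
    rw [he, Sym2.mem_iff] at hv
    rcases hv with rfl | rfl
    · rw [hd2.2] at hσ
      exact absurd hσ (by simp)
    · exact Finset.disjoint_left.mp hAB hd2.1 hb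
  · have hd2 : v' ∈ A ∧ σ (Sum.inl v') = Sum.inr v' := hd'
    obtain ⟨a, b, ha, hb, he, hσ⟩ :
        ∃ a b, a ∈ A ∧ b ∈ B ∧ (e : Sym2 V) = s(a, b) ∧ σ (Sum.inl a) = Sum.inl b := hd
    have hv : v' ∈ (e : Sym2 V) := hadj
    rw [he, Sym2.mem_iff] at hv
    rcases hv with rfl | rfl
    · rw [hd2.2] at hσ
      exact absurd hσ (by simp)
    · exact Finset.disjoint_left.mp hAB hd2.1 hb
  · obtain ⟨a, b, ha, hb, he, hσ⟩ :
        ∃ a b, a ∈ A ∧ b ∈ B ∧ (e : Sym2 V) = s(a, b) ∧ σ (Sum.inl a) = Sum.inl b := hd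
    obtain ⟨a', b', ha', hb', he', hσ'⟩ :
        ∃ a b, a ∈ A ∧ b ∈ B ∧ (e' : Sym2 V) = s(a, b) ∧ σ (Sum.inl a) = Sum.inl b := hd'
    obtain ⟨hef, u, hue, hue'⟩ : e ≠ e' ∧ ∃ u, u ∈ (e : Sym2 V) ∧ u ∈ (e' : Sym2 V) := hadj
    rw [he, Sym2.mem_iff] at hue
    rw [he', Sym2.mem_iff] at hue'
    rcases hue with rfl | rfl <;> rcases hue' with h3 | h3
    · -- u = a = a'
      subst h3
      rw [hσ] at hσ'
      have : b = b' := Sum.inl.inj hσ'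
      subst this
      exact hef (Subtype.ext (he.trans he'.symm))
    · -- u = a = b'
      exact Finset.disjoint_left.mp hAB ha (h3 ▸ hb')
    · -- u = b = a'
      exact Finset.disjoint_left.mp hAB (h3 ▸ ha') hb
    · -- u = b = b'
      subst h3
      rw [← hσ'] at hσ
      have : a = a' := Sum.inl.inj (σ.injective hσ)
      subst this
      exact hef (Subtype.ext (he.trans he'.symm))

end TM

/-- description of `P_A`, the face of the total matching polytope of
`K_{r,s}` where all vertex variables on the side `B` vanish. -/
theorem PA_description
    [Fintype V] [DecidableEq V] (G : SimpleGraph V) [DecidableRel G.Adj]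
    (A B : Finset V) (hG : IsCompleteBipartiteWith G A B) :
    {z ∈ totalMatchingPolytope G | ∀ w ∈ B, z (Sum.inl w) = 0} =
      {z : (V ⊕ G.edgeSet) → ℝ |
        (∀ d, 0 ≤ z d) ∧
        (∀ w ∈ B, z (Sum.inl w) = 0) ∧
        (∀ v ∈ A, z (Sum.inl v) +
            ∑ e : G.edgeSet, (if v ∈ (e : Sym2 V) then z (Sum.inr e) else 0) ≤ 1) ∧
        (∀ w ∈ B,
            ∑ e : G.edgeSet, (if w ∈ (e : Sym2 V) then z (Sum.inr e) else 0) ≤ 1)} := by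
  obtain ⟨hAB, hUniv, hAdj⟩ := hG
  have hmem : ∀ v : V, v ∈ A ∨ v ∈ B := fun v =>
    Finset.mem_union.mp (hUniv ▸ Finset.mem_univ v)
  ext z
  simp only [Set.mem_setOf_eq, Set.mem_sep_iff]
  constructor
  · rintro ⟨hz, hB0⟩
    have hQ : z ∈ {z' : (V ⊕ G.edgeSet) → ℝ | (∀ d, 0 ≤ z' d) ∧ ∀ v : V, z' (Sum.inl v)
        + ∑ e : G.edgeSet, (if v ∈ (e : Sym2 V) then z' (Sum.inr e) else 0) ≤ 1} := by
      refine convexHull_min ?_ ?_ hz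
      · rintro z' ⟨T, hT, rfl⟩
        exact ⟨charVec_nonneg G T, charVec_constraint G hT⟩
      · intro z1 h1 z2 h2 a b ha hb hab
        constructor
        · intro d
          have g1 := h1.1 d
          have g2 := h2.1 d
          simp only [Pi.add_apply, Pi.smul_apply, smul_eq_mul]
          nlinarith
        · intro v
          have e1 := h1.2 v
          have e2 := h2.2 v
          simp only [Pi.add_apply, Pi.smul_apply, smul_eq_mul]
          have key : ∀ e : G.edgeSet, (if v ∈ (e : Sym2 V) then
                a * z1 (Sum.inr e) + b * z2 (Sum.inr e) else 0)
              = a * (if v ∈ (e : Sym2 V) then z1 (Sum.inr e) else 0)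
                + b * (if v ∈ (e : Sym2 V) then z2 (Sum.inr e) else 0) := by
            intro e; split <;> ring
          rw [Finset.sum_congr rfl (fun e _ => key e), Finset.sum_add_distrib,
            ← Finset.mul_sum, ← Finset.mul_sum]
          nlinarith
    refine ⟨hQ.1, hB0, fun v _ => hQ.2 v, fun w hw => ?_⟩
    have h1 := hQ.2 w
    have h2 := hQ.1 (Sum.inl w)
    linarith
  · rintro ⟨hpos, hB0, hA1, hB1⟩
    have hv1 : ∀ v : V, z (Sum.inl v)
        + ∑ e : G.edgeSet, (if v ∈ (e : Sym2 V) then z (Sum.inr e) else 0) ≤ 1 := by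
      intro v
      rcases hmem v with h | h
      · exact hA1 v h
      · rw [hB0 v h, zero_add]
        exact hB1 v h
    have hDS := TMmat_mem_DS G z hpos hv1
    obtain ⟨w, hw0, hw1, hwD⟩ := exists_eq_sum_perm_of_mem_doublyStochastic hDS
    have hentry : ∀ i j, ∑ σ : Equiv.Perm (V ⊕ V), w σ * (σ.permMatrix ℝ) i j
        = TMmat G z i j := by
      intro i j
      have h := congrFun (congrFun hwD i) j
      simpa [Matrix.sum_apply, Matrix.smul_apply, smul_eq_mul] using h
    classical
    have hzsum : ∑ σ : Equiv.Perm (V ⊕ V), w σ • charVec G (permTM G A B σ) = z := by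
      funext d
      rw [Finset.sum_apply]
      simp only [Pi.smul_apply, smul_eq_mul]
      match d with
      | Sum.inl v =>
        rcases hmem v with hv | hv
        · have hc : ∀ σ : Equiv.Perm (V ⊕ V), charVec G (permTM G A B σ) (Sum.inl v)
              = (σ.permMatrix ℝ) (Sum.inl v) (Sum.inr v) := by
            intro σ
            rw [permMatrix_apply']
            by_cases h : σ (Sum.inl v) = Sum.inr v
            · have hm : Sum.inl v ∈ permTM G A B σ := ⟨hv, h⟩
              rw [if_pos h]
              unfold charVec
              rw [Set.indicator_of_mem hm]
            · have hm : Sum.inl v ∉ permTM G A B σ :=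
                fun hm => h (hm : v ∈ A ∧ σ (Sum.inl v) = Sum.inr v).2
              rw [if_neg h]
              unfold charVec
              rw [Set.indicator_of_notMem hm]
          simp_rw [hc]
          rw [hentry (Sum.inl v) (Sum.inr v)]
          simp [TMmat]
        · have hc : ∀ σ : Equiv.Perm (V ⊕ V),
              charVec G (permTM G A B σ) (Sum.inl v) = 0 := by
            intro σ
            have hm : Sum.inl v ∉ permTM G A B σ :=
              fun hm => Finset.disjoint_left.mp hAB
                (hm : v ∈ A ∧ σ (Sum.inl v) = Sum.inr v).1 hv
            unfold charVec
            rw [Set.indicator_of_notMem hm]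
          simp_rw [hc]
          rw [hB0 v hv]
          simp
      | Sum.inr e =>
        obtain ⟨a₀, b₀, ha₀, hb₀, heq⟩ := exists_pair G hAdj e.2
        have hc : ∀ σ : Equiv.Perm (V ⊕ V), charVec G (permTM G A B σ) (Sum.inr e)
            = (σ.permMatrix ℝ) (Sum.inl a₀) (Sum.inl b₀) := by
          intro σ
          rw [permMatrix_apply']
          by_cases h : σ (Sum.inl a₀) = Sum.inl b₀
          · have hm : Sum.inr e ∈ permTM G A B σ := ⟨a₀, b₀, ha₀, hb₀, heq, h⟩
            rw [if_pos h]
            unfold charVec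
            rw [Set.indicator_of_mem hm]
          · rw [if_neg h]
            unfold charVec
            refine Set.indicator_of_notMem (fun hm => ?_) _
            obtain ⟨a, b, ha, hb, he2, hσ⟩ : ∃ a b, a ∈ A ∧ b ∈ B
                ∧ (e : Sym2 V) = s(a, b) ∧ σ (Sum.inl a) = Sum.inl b := hm
            rw [heq, Sym2.eq_iff] at he2
            rcases he2 with ⟨rfl, rfl⟩ | ⟨rfl, rfl⟩
            · exact h hσ
            · exact Finset.disjoint_left.mp hAB ha hb₀
        simp_rw [hc]
        rw [hentry (Sum.inl a₀) (Sum.inl b₀)]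
        have hne : a₀ ≠ b₀ := fun h => Finset.disjoint_left.mp hAB ha₀ (h ▸ hb₀)
        have hadj : G.Adj a₀ b₀ := (hAdj a₀ b₀).mpr (Or.inl ⟨ha₀, hb₀⟩)
        simp only [TMmat, if_neg hne, dif_pos hadj, zero_add]
        exact congrArg z (congrArg Sum.inr (Subtype.ext heq.symm))
    refine ⟨?_, hB0⟩
    rw [totalMatchingPolytope]
    exact mem_convexHull_of_exists_fintype w (fun σ => charVec G (permTM G A B σ))
      hw0 hw1 (fun σ => ⟨permTM G A B σ, permTM_isTotalMatching G hAB hAdj σ, rfl⟩) hzsum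
end

section
/- Let K_{r,s} be a complete bipartite graph with vertex bipartition (A,B), and define P_A := {z∈P_T(K_{r,s}) : z_w = 0 for all w∈B} and P_B := {z∈P_T(K_{r,s}) : z_v = 0 for all v∈A}. Then P_T(K_{r,s}) = conv(P_A ∪ P_B), the convex hull of the union of P_A and P_B. -/
open Finset

variable {V : Type*}

/-- the total matching polytope of `K_{r,s}` is the convex hull of the
union of its faces `P_A` (no vertex of `B` used) and `P_B` (no vertex of `A` used). -/
theorem totalMatchingPolytope_eq_convexHull_union
    [Fintype V] [DecidableEq V] (G : SimpleGraph V)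
    (A B : Finset V) (hG : IsCompleteBipartiteWith G A B) :
    totalMatchingPolytope G =
      convexHull ℝ
        ({z ∈ totalMatchingPolytope G | ∀ w ∈ B, z (Sum.inl w) = 0} ∪
         {z ∈ totalMatchingPolytope G | ∀ v ∈ A, z (Sum.inl v) = 0}) := by
  obtain ⟨hdisj, hcover, hadj⟩ := hG
  apply le_antisymm
  · -- each generator is in one of the two sets
    apply convexHull_min _ (convex_convexHull ℝ _)
    rintro z ⟨T, hT, rfl⟩
    apply subset_convexHull
    have hmem : charVec G T ∈ totalMatchingPolytope G :=
      subset_convexHull ℝ _ ⟨T, hT, rfl⟩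
    by_cases h : ∃ w ∈ B, Sum.inl w ∈ T
    · right
      refine ⟨hmem, fun v hv => ?_⟩
      obtain ⟨w, hw, hwT⟩ := h
      have hvT : Sum.inl v ∉ T := by
        intro hvT
        have hne : (Sum.inl w : V ⊕ G.edgeSet) ≠ Sum.inl v := by
          intro he
          have : w = v := by simpa using he
          exact (Finset.disjoint_left.mp hdisj hv) (this ▸ hw)
        exact hT _ hwT _ hvT hne ((hadj w v).mpr (Or.inr ⟨hw, hv⟩))
      simp [charVec, Set.indicator_of_notMem hvT]
    · left
      refine ⟨hmem, fun w hw => ?_⟩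
      have : Sum.inl w ∉ T := fun hwT => h ⟨w, hw, hwT⟩
      simp [charVec, Set.indicator_of_notMem this]
  · apply convexHull_min _ (convex_convexHull ℝ _)
    rintro z (⟨hz, -⟩ | ⟨hz, -⟩) <;> exact hz
end
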